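/- arXiv:2510.20167 — 3 statements merged into one kernel-verified Lean document; each statement's English description precedes it below -/
import Mathlib

section
/- Let n be a positive integer, A an n × n integer matrix, M(x) = adj(x•I − A) the adjugate of its characteristic matrix, v = (1, 2, …, n)ᵀ, and m(x) = det(x•I − A). Then there exists an integer x₀ such that for all integers x > x₀, the vector y = M(x) *ᵥ v (entries obtained by evaluating the polynomial entries of M at x) satisfies 0 < y_0 < y_1 < ⋯ < y_{n−1} < m(x). -/
/-!
Write `p = adj(X•I − A) *ᵥ v` as a vector of integer polynomials. The identity
`adj(X•I − A) * (X•I − A) = m • I`, read in `(Matrix n n ℤ)[X]`, says that the matrix polynomial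
`adj(X•I − A)` times the monic `X − A` is the monic `m` of degree `n`; hence `adj(X•I − A)` is
monic of degree `n − 1`. So `p i = (i + 1) X^(n−1) + (lower terms)`, and each of `p 0`,
`p j − p i` (for `i < j`) and `m − p i` has a positive leading coefficient, hence is positive at
all large integers.
-/

open Polynomial Filter

namespace Polynomial

theorem eventually_pos_eval_of_leadingCoeff_pos {𝕜 : Type*} [NormedField 𝕜] [LinearOrder 𝕜]
    [IsStrictOrderedRing 𝕜] [OrderTopology 𝕜] {P : 𝕜[X]} (hP : 0 < P.leadingCoeff) :
    ∀ᶠ x in atTop, 0 < P.eval x := by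
  rcases le_or_gt P.degree 0 with hdeg | hdeg
  · rw [eq_C_of_degree_le_zero hdeg, leadingCoeff_C] at hP
    rw [eq_C_of_degree_le_zero hdeg]
    exact .of_forall fun _ => by rwa [eval_C]
  · exact (P.tendsto_atTop_of_leadingCoeff_nonneg hdeg hP.le).eventually_gt_atTop 0

theorem eventually_pos_eval_int_of_leadingCoeff_pos {P : ℤ[X]} (hP : 0 < P.leadingCoeff) :
    ∀ᶠ x : ℤ in atTop, 0 < P.eval x := by
  have hPℝ : 0 < (P.map (Int.castRingHom ℝ)).leadingCoeff := by
    rw [leadingCoeff_map_of_injective (RingHom.injective_int _), eq_intCast]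
    exact_mod_cast hP
  filter_upwards [tendsto_intCast_atTop_atTop.eventually
    (eventually_pos_eval_of_leadingCoeff_pos hPℝ)] with x hx
  simpa using hx

theorem eventually_pos_eval_int_of_natDegree_le {P : ℤ[X]} {d : ℕ} (hdeg : P.natDegree ≤ d)
    (hd : 0 < P.coeff d) : ∀ᶠ x : ℤ in atTop, 0 < P.eval x := by
  have hnatDegree : P.natDegree = d := le_antisymm hdeg (le_natDegree_of_ne_zero hd.ne')
  exact eventually_pos_eval_int_of_leadingCoeff_pos (by rwa [leadingCoeff, hnatDegree])

end Polynomial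

namespace Matrix

section CommRing

variable {R ι : Type*} [CommRing R] [Fintype ι] [DecidableEq ι]

theorem coeff_mulVec_C (N : Matrix ι ι R[X]) (w : ι → R) (i : ι) (k : ℕ) :
    ((N *ᵥ fun j => C (w j)) i).coeff k = ((matPolyEquiv N).coeff k *ᵥ w) i := by
  simp [mulVec, dotProduct, coeff_mul_C, matPolyEquiv_coeff_apply]

theorem matPolyEquiv_adjugate_charmatrix_mul (M : Matrix ι ι R) :
    matPolyEquiv (charmatrix M).adjugate * (X - C M) =
      M.charpoly.map (algebraMap R (Matrix ι ι R)) := by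
  rw [← matPolyEquiv_charmatrix, ← map_mul, adjugate_mul, ← matPolyEquiv_smul_one]
  rfl

theorem monic_matPolyEquiv_adjugate_charmatrix (M : Matrix ι ι R) :
    (matPolyEquiv (charmatrix M).adjugate).Monic :=
  (monic_X_sub_C M).of_mul_monic_right <| by
    rw [matPolyEquiv_adjugate_charmatrix_mul]
    exact M.charpoly_monic.map _

theorem natDegree_matPolyEquiv_adjugate_charmatrix [Nontrivial R] [Nonempty ι]
    (M : Matrix ι ι R) :
    (matPolyEquiv (charmatrix M).adjugate).natDegree = Fintype.card ι - 1 := by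
  have h := congrArg natDegree (matPolyEquiv_adjugate_charmatrix_mul M)
  rw [(monic_matPolyEquiv_adjugate_charmatrix M).natDegree_mul (monic_X_sub_C M),
    natDegree_X_sub_C, M.charpoly_monic.natDegree_map, charpoly_natDegree_eq_dim] at h
  have : 0 < Fintype.card ι := Fintype.card_pos
  omega

theorem natDegree_adjugate_charmatrix_mulVec_le [Nontrivial R] (M : Matrix ι ι R) (w : ι → R)
    (i : ι) :
    (((charmatrix M).adjugate *ᵥ fun j => C (w j)) i).natDegree ≤ Fintype.card ι - 1 := by
  have : Nonempty ι := ⟨i⟩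
  refine natDegree_le_iff_coeff_eq_zero.2 fun k hk => ?_
  rw [coeff_mulVec_C, coeff_eq_zero_of_natDegree_lt
    (by rwa [natDegree_matPolyEquiv_adjugate_charmatrix]), zero_mulVec, Pi.zero_apply]

theorem coeff_adjugate_charmatrix_mulVec [Nontrivial R] (M : Matrix ι ι R) (w : ι → R) (i : ι) :
    (((charmatrix M).adjugate *ᵥ fun j => C (w j)) i).coeff (Fintype.card ι - 1) = w i := by
  have : Nonempty ι := ⟨i⟩
  rw [coeff_mulVec_C, ← natDegree_matPolyEquiv_adjugate_charmatrix M,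
    (monic_matPolyEquiv_adjugate_charmatrix M).coeff_natDegree, one_mulVec]

end CommRing

variable {ι : Type*} [Fintype ι] [DecidableEq ι] (A : Matrix ι ι ℤ) {w : ι → ℤ}

theorem eventually_pos_eval_adjugate_charmatrix_mulVec {i : ι} (hw : 0 < w i) :
    ∀ᶠ x : ℤ in atTop, 0 < (((charmatrix A).adjugate *ᵥ fun j => C (w j)) i).eval x :=
  eventually_pos_eval_int_of_natDegree_le (natDegree_adjugate_charmatrix_mulVec_le A w i)
    (by rwa [coeff_adjugate_charmatrix_mulVec])

theorem eventually_strictMono_eval_adjugate_charmatrix_mulVec [Preorder ι] (hw : StrictMono w) :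
    ∀ᶠ x : ℤ in atTop,
      StrictMono fun i => (((charmatrix A).adjugate *ᵥ fun j => C (w j)) i).eval x := by
  set p := (charmatrix A).adjugate *ᵥ fun j => C (w j)
  refine eventually_all.2 fun i => eventually_all.2 fun j => eventually_imp_distrib_left.2
    fun hij => ?_
  have hdeg : (p j - p i).natDegree ≤ Fintype.card ι - 1 := (natDegree_sub_le _ _).trans
    (max_le (natDegree_adjugate_charmatrix_mulVec_le A w j)
      (natDegree_adjugate_charmatrix_mulVec_le A w i))
  have hcoeff : 0 < (p j - p i).coeff (Fintype.card ι - 1) := by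
    rw [coeff_sub, coeff_adjugate_charmatrix_mulVec, coeff_adjugate_charmatrix_mulVec, sub_pos]
    exact hw hij
  filter_upwards [eventually_pos_eval_int_of_natDegree_le hdeg hcoeff] with x hx
  rwa [eval_sub, sub_pos] at hx

theorem eventually_eval_adjugate_charmatrix_mulVec_lt_charpoly (w : ι → ℤ) (i : ι) :
    ∀ᶠ x : ℤ in atTop,
      (((charmatrix A).adjugate *ᵥ fun j => C (w j)) i).eval x < A.charpoly.eval x := by
  set p := (charmatrix A).adjugate *ᵥ fun j => C (w j)
  have hp : (p i).natDegree < Fintype.card ι := by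
    have : (p i).natDegree ≤ Fintype.card ι - 1 := natDegree_adjugate_charmatrix_mulVec_le A w i
    have : 0 < Fintype.card ι := Fintype.card_pos_iff.2 ⟨i⟩
    omega
  have hdeg : (A.charpoly - p i).natDegree ≤ Fintype.card ι :=
    (natDegree_sub_le _ _).trans (max_le (charpoly_natDegree_eq_dim A).le hp.le)
  have hcoeff : 0 < (A.charpoly - p i).coeff (Fintype.card ι) := by
    rw [coeff_sub, coeff_eq_zero_of_natDegree_lt hp, ← charpoly_natDegree_eq_dim A,
      A.charpoly_monic.coeff_natDegree]
    norm_num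
  filter_upwards [eventually_pos_eval_int_of_natDegree_le hdeg hcoeff] with x hx
  rwa [eval_sub, sub_pos] at hx

end Matrix

open Matrix in
/-- With `M(x) = adj(x•I − A)`, `v = (1,…,n)ᵀ`, and
`m(x) = det(x•I − A)`, for all sufficiently large integers `x` the vector
`y = M(x) *ᵥ v` satisfies `0 < y 0 < y 1 < ⋯ < y (n-1) < m(x)`. -/
theorem adj_poly_strict_increasing (n : ℕ) (hn : 0 < n)
    (A : Matrix (Fin n) (Fin n) ℤ) :
    ∃ x₀ : ℤ, ∀ x : ℤ, x₀ < x →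
      ∀ y : Fin n → ℤ,
        (y = fun i => ∑ k : Fin n,
          ((((X : ℤ[X]) • (1 : Matrix (Fin n) (Fin n) ℤ[X]) - A.map C).adjugate i k).eval x)
            * ((k : ℤ) + 1)) →
        0 < y ⟨0, hn⟩ ∧ StrictMono y ∧
          ∀ i : Fin n,
            y i < ((((X : ℤ[X]) • (1 : Matrix (Fin n) (Fin n) ℤ[X]) - A.map C).det).eval x) := by
  have hcharmatrix : (X : ℤ[X]) • (1 : Matrix (Fin n) (Fin n) ℤ[X]) - A.map C = charmatrix A := by
    simp [charmatrix, smul_one_eq_diagonal]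
  have hw : StrictMono fun k : Fin n => (k : ℤ) + 1 := fun i j hij => by simpa using hij
  obtain ⟨x₀, hx₀⟩ := eventually_atTop.1
    ((eventually_pos_eval_adjugate_charmatrix_mulVec A (w := fun k : Fin n => (k : ℤ) + 1)
      (i := ⟨0, hn⟩) (by simp)).and
      ((eventually_strictMono_eval_adjugate_charmatrix_mulVec A hw).and
        (eventually_all.2 (eventually_eval_adjugate_charmatrix_mulVec_lt_charpoly A _))))
  refine ⟨x₀, fun x hx y hy => ?_⟩
  have hy' : y = fun i => (((charmatrix A).adjugate *ᵥ fun k => C ((k : ℤ) + 1)) i).eval x := by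
    simp [hy, hcharmatrix, mulVec, dotProduct, eval_finsetSum]
  rw [hy', hcharmatrix]
  exact hx₀ x hx.le
end

section
/- For every positive integer n and every function f : Fin n → Fin n, there exist a positive integer m, an integer a with 0 ≤ a < m, and an injective function j : Fin n → ZMod m such that for all i, j(f(i)) = a * j(i) in ZMod m. That is, every function on a finite set admits a linear representation: after an injective embedding into ℤ/mℤ, the action of f becomes multiplication by the constant a. -/
namespace LinRep


def S (p : ℕ) : ℕ → (ℕ → ℕ) → ℕ
  | 0, _ => 0
  | m + 1, g => p * S p m g + g m

lemma S_shift (p : ℕ) : ∀ (m : ℕ) (g : ℕ → ℕ),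
    p * S p m g + g m = S p m (fun k => g (k + 1)) + p ^ m * g 0 := by
  intro m
  induction m with
  | zero => intro g; simp [S]
  | succ m ih =>
    intro g
    have h2 : p * (p * S p m g + g m) =
        p * (S p m (fun k => g (k + 1)) + p ^ m * g 0) := by rw [ih g]
    simp only [S, pow_succ]
    ring_nf
    ring_nf at h2
    linarith

lemma S_digit_inj (p : ℕ) (hp : 0 < p) : ∀ (m : ℕ) (g h : ℕ → ℕ),
    (∀ k < m, g k < p) → (∀ k < m, h k < p) → S p m g = S p m h →
    ∀ k < m, g k = h k := by
  intro m
  induction m with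
  | zero => intro g h _ _ _ k hk; omega
  | succ m ih =>
    intro g h hg hh he k hk
    simp only [S] at he
    have h1 : g m = h m := by
      have e1 : (p * S p m g + g m) % p = g m := by
        rw [Nat.mul_add_mod]; exact Nat.mod_eq_of_lt (hg m (by omega))
      have e2 : (p * S p m h + h m) % p = h m := by
        rw [Nat.mul_add_mod]; exact Nat.mod_eq_of_lt (hh m (by omega))
      rw [← e1, ← e2, he]
    have h3 : S p m g = S p m h := by
      have : p * S p m g = p * S p m h := by omega
      exact Nat.eq_of_mul_eq_mul_left hp this
    rcases Nat.lt_or_ge k m with hk' | hk'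
    · exact ih g h (fun k hk => hg k (by omega)) (fun k hk => hh k (by omega)) h3 k hk'
    · have : k = m := by omega
      rw [this]; exact h1

lemma S_lt (p : ℕ) (hp : 0 < p) : ∀ (m : ℕ) (g : ℕ → ℕ),
    (∀ k < m, g k < p) → S p m g < p ^ m := by
  intro m
  induction m with
  | zero => intro g _; simp [S]
  | succ m ih =>
    intro g hg
    have h1 : S p m g < p ^ m := ih g (fun k hk => hg k (by omega))
    have h2 : g m < p := hg m (by omega)
    calc p * S p m g + g m < p * S p m g + p := by omega
    _ = p * (S p m g + 1) := by ring
    _ ≤ p * p ^ m := Nat.mul_le_mul_left p (by omega)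
    _ = p ^ (m + 1) := by ring

lemma S_le2 (p : ℕ) : ∀ (m : ℕ) (g : ℕ → ℕ), 0 < m →
    (∀ k < m, g k + 2 ≤ p) → S p m g + 2 ≤ p ^ m := by
  intro m
  induction m with
  | zero => omega
  | succ m ih =>
    intro g _ hg
    rcases Nat.eq_zero_or_pos m with hm | hm
    · subst hm; simpa [S] using hg 0 (by omega)
    · have h1 : S p m g + 2 ≤ p ^ m := ih g hm (fun k hk => hg k (by omega))
      have h2 : g m + 2 ≤ p := hg m (by omega)
      have h3 : p * (S p m g + 2) ≤ p * p ^ m := Nat.mul_le_mul_left p (by omega)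
      have hp2 : 2 ≤ p := by omega
      show p * S p m g + g m + 2 ≤ p ^ (m + 1)
      have : p ^ (m + 1) = p * p ^ m := by ring
      nlinarith

end LinRep

open LinRep

/-- Main Theorem: Every function `f : Fin n → Fin n` has a
linear representation: there are a positive modulus `m`, an integer `a` with
`0 ≤ a < m`, and an injective `j : Fin n → ZMod m` with
`j (f i) = a * j i` for all `i`. -/
theorem linear_representation (n : ℕ) (hn : 0 < n) (f : Fin n → Fin n) :
    ∃ (m : ℕ), 0 < m ∧ ∃ (a : ℤ), 0 ≤ a ∧ a < (m : ℤ) ∧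
      ∃ j : Fin n → ZMod m, Function.Injective j ∧
        ∀ i : Fin n, j (f i) = (a : ZMod m) * j i := by
  set p : ℕ := n + 2 with hp_def
  have hp : 0 < p := by omega
  set N : ℕ := n.factorial with hN_def
  have hN1 : 1 ≤ N := Nat.factorial_pos n
  have hNn : n ≤ N := Nat.self_le_factorial n
  -- every point reaches a periodic point within n steps
  have per_iter : ∀ i : Fin n, f^[N] (f^[n] i) = f^[n] i := by
    intro i
    have key : ∀ s t : ℕ, s < t → t ≤ n → f^[s] i = f^[t] i →
        f^[N] (f^[n] i) = f^[n] i := by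
      intro s t hst htn hfe
      set ℓ : ℕ := t - s with hl
      have hl0 : 0 < ℓ := by omega
      have hldvd : ℓ ∣ N := Nat.dvd_factorial hl0 (by omega)
      have hper : Function.IsPeriodicPt f ℓ (f^[s] i) := by
        show f^[ℓ] (f^[s] i) = f^[s] i
        rw [← Function.iterate_add_apply, hl]
        have : t - s + s = t := by omega
        rw [this, ← hfe]
      have hper2 := hper.apply_iterate (n - s)
      rw [← Function.iterate_add_apply] at hper2
      have hns : n - s + s = n := by omega
      rw [hns] at hper2
      have hper3 := hper2.mul_const (N / ℓ)
      rwa [Nat.mul_div_cancel' hldvd] at hper3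
    obtain ⟨x, y, hxy, hfe⟩ := Fintype.exists_ne_map_eq_of_card_lt
      (fun k : Fin (n + 1) => f^[(k : ℕ)] i) (by simp)
    rcases Fin.lt_or_lt_of_ne hxy with hlt | hlt
    · exact key x y hlt (by omega) hfe
    · exact key y x hlt (by omega) hfe.symm
  have per_map : ∀ i : Fin n, f^[N] i = i → f^[N] (f i) = f i := by
    intro i hi
    rw [← Function.iterate_succ_apply, Function.iterate_succ_apply', hi]
  -- digit functions
  set c : Fin n → ℕ := fun i => if f^[N] i = i then 0 else (i : ℕ) + 1 with hc_def
  set d : Fin n → ℕ := fun i => (i : ℕ) + 1 with hd_def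
  have hc_lt : ∀ i, c i < p := by
    intro i; simp only [hc_def]; split <;> omega
  have hd_lt : ∀ i, d i + 2 ≤ p := by intro i; simp only [hd_def]; omega
  set T : Fin n → ℕ := fun i => S p (n + 1) (fun k => c (f^[k] i)) with hT_def
  set σ : Fin n → ℕ := fun x => S p N (fun k => d (f^[k] x)) with hσ_def
  -- bounds
  have hT_lt : ∀ i, T i < p ^ (n + 1) := fun i =>
    S_lt p hp (n + 1) _ (fun k _ => hc_lt _)
  have hσ_lt : ∀ x, σ x + 2 ≤ p ^ N := fun x =>
    S_le2 p N _ (by omega) (fun k _ => hd_lt _)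
  -- identity A :  p * T i = T (f i) + p^(n+1) * c i
  have idA : ∀ i, p * T i = T (f i) + p ^ (n + 1) * c i := by
    intro i
    have h := S_shift p (n + 1) (fun k => c (f^[k] i))
    have h0 : c (f^[n + 1] i) = 0 := by
      have : f^[N] (f^[n + 1] i) = f^[n + 1] i := by
        rw [Function.iterate_succ_apply']
        exact per_map _ (per_iter i)
      simp only [hc_def, if_pos this]
    rw [h0, Nat.add_zero] at h
    rw [h, hT_def]
    have : (fun k => c (f^[k + 1] i)) = (fun k => c (f^[k] (f i))) := by
      funext k; rw [Function.iterate_succ_apply]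
    simp only [this, Function.iterate_zero, id_eq]
  -- identity B : for periodic x,  p * σ x + d x = σ (f x) + p^N * d x
  have idB : ∀ x, f^[N] x = x → p * σ x + d x = σ (f x) + p ^ N * d x := by
    intro x hx
    have h := S_shift p N (fun k => d (f^[k] x))
    rw [hx] at h
    rw [h, hσ_def]
    have : (fun k => d (f^[k + 1] x)) = (fun k => d (f^[k] (f x))) := by
      funext k; rw [Function.iterate_succ_apply]
    simp only [this, Function.iterate_zero, id_eq]
  -- moduli
  have hcop : Nat.Coprime (p ^ (n + 1)) (p ^ N - 1) := by
    have h1 : Nat.Coprime (p ^ N) (p ^ N - 1) := by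
      have h0 : p ^ N - 1 + 1 = p ^ N := by
        have : 1 ≤ p ^ N := Nat.one_le_pow _ _ hp
        omega
      rw [← h0]
      have := Nat.gcd_self_add_left 1 (p ^ N - 1)
      simpa [Nat.Coprime, Nat.add_comm] using this
    have h2 : Nat.Coprime p (p ^ N - 1) :=
      Nat.Coprime.coprime_dvd_left (dvd_pow_self p (by omega)) h1
    exact h2.pow_left _
  have hpN2 : 2 ≤ p ^ N := by
    calc 2 ≤ p := by omega
    _ = p ^ 1 := (pow_one p).symm
    _ ≤ p ^ N := Nat.pow_le_pow_right (by omega) hN1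
  set M : ℕ := p ^ (n + 1) * (p ^ N - 1) with hM_def
  have hM0 : 0 < M := Nat.mul_pos (Nat.pow_pos hp) (by omega)
  set e := ZMod.chineseRemainder hcop with he_def
  set j : Fin n → ZMod M := fun i =>
    e.symm (((T i : ℕ) : ZMod (p ^ (n + 1))), ((σ (f^[n] i) : ℕ) : ZMod (p ^ N - 1)))
    with hj_def
  refine ⟨M, hM0, (p : ℤ), by positivity, ?_, j, ?_, ?_⟩
  · -- p < M
    have h1 : p < p ^ (n + 1) := by
      calc p = p ^ 1 := (pow_one p).symm
      _ < p ^ (n + 1) := Nat.pow_lt_pow_right (by omega) (by omega)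
    have h2 : p ^ (n + 1) ≤ M := by
      have : 1 ≤ p ^ N - 1 := by omega
      calc p ^ (n + 1) = p ^ (n + 1) * 1 := (mul_one _).symm
      _ ≤ M := Nat.mul_le_mul_left _ this
    exact_mod_cast lt_of_lt_of_le h1 h2
  · -- injectivity
    intro i1 i2 hji
    have hpair : ((T i1 : ZMod (p ^ (n + 1))), ((σ (f^[n] i1) : ℕ) : ZMod (p ^ N - 1)))
        = ((T i2 : ZMod (p ^ (n + 1))), ((σ (f^[n] i2) : ℕ) : ZMod (p ^ N - 1))) :=
      e.symm.injective hji
    have hT12 : T i1 = T i2 := by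
      have h := congrArg Prod.fst hpair
      simp only at h
      have := congrArg ZMod.val h
      rwa [ZMod.val_cast_of_lt (hT_lt i1), ZMod.val_cast_of_lt (hT_lt i2)] at this
    have hσ12 : σ (f^[n] i1) = σ (f^[n] i2) := by
      have h := congrArg Prod.snd hpair
      simp only at h
      have := congrArg ZMod.val h
      rwa [ZMod.val_cast_of_lt (by have := hσ_lt (f^[n] i1); omega),
           ZMod.val_cast_of_lt (by have := hσ_lt (f^[n] i2); omega)] at this
    -- first digit of T : c i1 = c i2
    have hc12 : c i1 = c i2 := by
      have h := S_digit_inj p hp (n + 1) _ _ (fun k _ => hc_lt _) (fun k _ => hc_lt _)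
        hT12 0 (by omega)
      simpa using h
    -- first digit of σ : d (f^[n] i1) = d (f^[n] i2)
    have hd12 : d (f^[n] i1) = d (f^[n] i2) := by
      have h := S_digit_inj p hp N _ _ (fun k _ => by have := hd_lt (f^[k] (f^[n] i1)); omega)
        (fun k _ => by have := hd_lt (f^[k] (f^[n] i2)); omega) hσ12 0 (by omega)
      simpa using h
    have hfn12 : f^[n] i1 = f^[n] i2 := by
      have : ((f^[n] i1 : Fin n) : ℕ) = ((f^[n] i2 : Fin n) : ℕ) := by
        simp only [hd_def] at hd12; omega
      exact Fin.ext this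
    by_cases h1 : f^[N] i1 = i1 <;> by_cases h2 : f^[N] i2 = i2
    · -- both periodic
      have e1 : f^[N - n] (f^[n] i1) = i1 := by
        rw [← Function.iterate_add_apply]
        have : N - n + n = N := by omega
        rw [this, h1]
      have e2 : f^[N - n] (f^[n] i2) = i2 := by
        rw [← Function.iterate_add_apply]
        have : N - n + n = N := by omega
        rw [this, h2]
      rw [← e1, ← e2, hfn12]
    · simp only [hc_def, if_pos h1, if_neg h2] at hc12; omega
    · simp only [hc_def, if_neg h1, if_pos h2] at hc12; omega
    · simp only [hc_def, if_neg h1, if_neg h2] at hc12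
      exact Fin.ext (by omega)
  · -- the linear relation
    intro i
    have hTrel : ((T (f i) : ℕ) : ZMod (p ^ (n + 1))) = (p : ZMod (p ^ (n + 1))) * (T i : ℕ) := by
      have := idA i
      have hcast := congrArg (Nat.cast : ℕ → ZMod (p ^ (n + 1))) this
      simp only [Nat.cast_mul, Nat.cast_add, ZMod.natCast_self, zero_mul,
        add_zero] at hcast
      exact hcast.symm
    have hσrel : ((σ (f^[n] (f i)) : ℕ) : ZMod (p ^ N - 1))
        = (p : ZMod (p ^ N - 1)) * (σ (f^[n] i) : ℕ) := by
      have hper : f^[N] (f^[n] i) = f^[n] i := per_iter i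
      have := idB (f^[n] i) hper
      have hiter : f^[n] (f i) = f (f^[n] i) := by
        rw [← Function.iterate_succ_apply, Function.iterate_succ_apply']
      rw [hiter]
      have hcast := congrArg (Nat.cast : ℕ → ZMod (p ^ N - 1)) this
      have hone : ((p ^ N : ℕ) : ZMod (p ^ N - 1)) = 1 := by
        have hh : (p ^ N : ℕ) = (p ^ N - 1) + 1 := by omega
        have h2 := congrArg (Nat.cast : ℕ → ZMod (p ^ N - 1)) hh
        simp only [Nat.cast_add, ZMod.natCast_self, Nat.cast_one, zero_add] at h2
        exact h2
      simp only [Nat.cast_add, Nat.cast_mul, hone, one_mul] at hcast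
      exact (add_right_cancel hcast).symm
    show j (f i) = ((p : ℤ) : ZMod M) * j i
    have hpcast : ((p : ℤ) : ZMod M) = ((p : ℕ) : ZMod M) := by push_cast; ring
    rw [hpcast, hj_def]
    simp only
    rw [hTrel, hσrel]
    have : ((((p : ℕ) : ZMod (p ^ (n + 1))) * (T i : ℕ)),
        (((p : ℕ) : ZMod (p ^ N - 1)) * (σ (f^[n] i) : ℕ)))
        = ((p : ℕ) : ZMod (p ^ (n + 1)) × ZMod (p ^ N - 1))
          * (((T i : ℕ) : ZMod (p ^ (n + 1))), ((σ (f^[n] i) : ℕ) : ZMod (p ^ N - 1))) := by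
      simp [Prod.ext_iff]
    rw [this, map_mul, map_natCast]
end

section
/- Let n be a positive integer, A an n × n integer matrix, M(x) = adj(x•I − A), v = (1, 2, …, n)ᵀ, and p_i(x) = Σ_{k=0}^{n−1} M(x)_{i k} · (k+1). For all indices i < j, the difference p_j − p_i is a polynomial of degree n − 1 with leading coefficient j − i > 0; consequently there exists x₀ such that p_j(x) > p_i(x) for all integers x > x₀. -/
/-!
Every entry of `adj (X • A + B)` is a signed `(n-1)`-minor of `X • A + B`, hence has degree at
most `n - 1`, and its coefficient of `X ^ (n - 1)` is the corresponding entry of `adj A`. For the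
characteristic matrix (`A = 1`) this makes the coefficient of `X ^ (n - 1)` in `p i` equal to
`i + 1`, so `p j - p i` has degree `n - 1` and leading coefficient `j - i > 0`; a polynomial with
positive leading coefficient is eventually positive, being asymptotic to its leading term.
-/

open Polynomial Matrix Filter

namespace Matrix

variable {R : Type*} [CommRing R] {m : ℕ}

lemma adjugate_X_smul_add_C_apply (A B : Matrix (Fin (m + 1)) (Fin (m + 1)) R)
    (i k : Fin (m + 1)) :
    adjugate ((X : R[X]) • A.map C + B.map C) i k =
      C ((-1) ^ (k + i : ℕ)) * det ((X : R[X]) • (A.submatrix k.succAbove i.succAbove).map C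
        + (B.submatrix k.succAbove i.succAbove).map C) := by
  rw [adjugate_fin_succ_eq_det_submatrix]
  simp only [map_pow, map_neg, map_one]
  rfl

lemma natDegree_adjugate_X_smul_add_C_apply_le (A B : Matrix (Fin (m + 1)) (Fin (m + 1)) R)
    (i k : Fin (m + 1)) : (adjugate ((X : R[X]) • A.map C + B.map C) i k).natDegree ≤ m := by
  rw [adjugate_X_smul_add_C_apply]
  exact (natDegree_C_mul_le _ _).trans (by
    simpa using natDegree_det_X_add_C_le (A.submatrix k.succAbove i.succAbove)
      (B.submatrix k.succAbove i.succAbove))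

lemma coeff_adjugate_X_smul_add_C_apply (A B : Matrix (Fin (m + 1)) (Fin (m + 1)) R)
    (i k : Fin (m + 1)) :
    (adjugate ((X : R[X]) • A.map C + B.map C) i k).coeff m = adjugate A i k := by
  rw [adjugate_X_smul_add_C_apply, coeff_C_mul, adjugate_fin_succ_eq_det_submatrix]
  have hminor := coeff_det_X_add_C_card (A.submatrix k.succAbove i.succAbove)
    (B.submatrix k.succAbove i.succAbove)
  rw [Fintype.card_fin] at hminor
  rw [hminor]

lemma natDegree_adjugate_X_smul_add_C_mulVec_le (A B : Matrix (Fin (m + 1)) (Fin (m + 1)) R)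
    (v : Fin (m + 1) → R) (i : Fin (m + 1)) :
    ((adjugate ((X : R[X]) • A.map C + B.map C) *ᵥ fun k => C (v k)) i).natDegree ≤ m := by
  rw [mulVec, dotProduct]
  exact natDegree_sum_le_of_forall_le _ _ fun k _ =>
    (natDegree_mul_C_le _ _).trans (natDegree_adjugate_X_smul_add_C_apply_le A B i k)

lemma coeff_adjugate_X_smul_add_C_mulVec (A B : Matrix (Fin (m + 1)) (Fin (m + 1)) R)
    (v : Fin (m + 1) → R) (i : Fin (m + 1)) :
    ((adjugate ((X : R[X]) • A.map C + B.map C) *ᵥ fun k => C (v k)) i).coeff m =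
      (adjugate A *ᵥ v) i := by
  simp only [mulVec, dotProduct, finsetSum_coeff, coeff_mul_C, coeff_adjugate_X_smul_add_C_apply]

end Matrix

namespace Polynomial

lemma eventually_pos_of_leadingCoeff_pos {𝕜 : Type*} [NormedField 𝕜] [LinearOrder 𝕜]
    [IsStrictOrderedRing 𝕜] [OrderTopology 𝕜] {P : 𝕜[X]} (h : 0 < P.leadingCoeff) :
    ∀ᶠ x in atTop, 0 < P.eval x :=
  (isEquivalent_atTop_lead P).eventually_pos <|
    (eventually_gt_atTop 0).mono fun _ hx => mul_pos h (pow_pos hx _)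

lemma eventually_pos_of_leadingCoeff_pos_int {P : ℤ[X]} (h : 0 < P.leadingCoeff) :
    ∀ᶠ x in atTop, 0 < P.eval x := by
  have hℝ : 0 < (P.map (Int.castRingHom ℝ)).leadingCoeff := by
    rw [leadingCoeff_map_of_injective (RingHom.injective_int _), eq_intCast]
    exact_mod_cast h
  refine (tendsto_intCast_atTop_atTop.eventually (eventually_pos_of_leadingCoeff_pos hℝ)).mono
    fun x hx => ?_
  rw [eval_intCast_map, eq_intCast] at hx
  exact_mod_cast hx

end Polynomial

/-- With `p i = Σ_k adj(x•I − A)_{i k} * (k+1)`, for `i < j`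
the difference `p j − p i` has degree `n − 1` and positive leading coefficient
`j − i`; consequently `p j (x) > p i (x)` for all sufficiently large `x`. -/
theorem adj_poly_diff (n : ℕ) (hn : 0 < n)
    (A : Matrix (Fin n) (Fin n) ℤ)
    (p : Fin n → ℤ[X])
    (hp : ∀ i, p i = ∑ k : Fin n,
      (((X : ℤ[X]) • (1 : Matrix (Fin n) (Fin n) ℤ[X]) - A.map C).adjugate i k)
        * C ((k : ℤ) + 1))
    (i j : Fin n) (hij : i < j) :
    (p j - p i).natDegree = n - 1 ∧
    (p j - p i).leadingCoeff = (j : ℤ) - (i : ℤ) ∧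
    (0 : ℤ) < (j : ℤ) - (i : ℤ) ∧
    ∃ x₀ : ℤ, ∀ x : ℤ, x₀ < x → (p i).eval x < (p j).eval x := by
  obtain ⟨m, rfl⟩ : ∃ m, n = m + 1 := ⟨n - 1, by omega⟩
  have hcharmatrix : (X : ℤ[X]) • (1 : Matrix (Fin (m + 1)) (Fin (m + 1)) ℤ[X]) - A.map C =
      (X : ℤ[X]) • (1 : Matrix (Fin (m + 1)) (Fin (m + 1)) ℤ).map C + (-A).map C := by
    rw [Matrix.map_one _ (map_zero C) (map_one C), Matrix.map_neg _ (map_neg C), sub_eq_add_neg]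
  have hp_mulVec : ∀ a, p a = (adjugate
      ((X : ℤ[X]) • (1 : Matrix (Fin (m + 1)) (Fin (m + 1)) ℤ).map C + (-A).map C)
      *ᵥ fun k => C ((k : ℤ) + 1)) a := fun a => by rw [hp, hcharmatrix]; rfl
  have hdeg : (p j - p i).natDegree ≤ m := by
    refine (natDegree_sub_le _ _).trans (max_le ?_ ?_) <;>
      rw [hp_mulVec] <;> exact natDegree_adjugate_X_smul_add_C_mulVec_le _ _ _ _
  have hcoeff : (p j - p i).coeff m = (j : ℤ) - (i : ℤ) := by
    simp only [coeff_sub, hp_mulVec, coeff_adjugate_X_smul_add_C_mulVec, adjugate_one, one_mulVec]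
    ring
  have hpos : (0 : ℤ) < (j : ℤ) - (i : ℤ) := sub_pos.mpr (by exact_mod_cast hij)
  have hnatDegree : (p j - p i).natDegree = m :=
    natDegree_eq_of_le_of_coeff_ne_zero hdeg (hcoeff ▸ hpos.ne')
  have hlead : (p j - p i).leadingCoeff = (j : ℤ) - (i : ℤ) := by
    rw [leadingCoeff, hnatDegree, hcoeff]
  obtain ⟨x₀, hx₀⟩ :=
    eventually_atTop.mp (eventually_pos_of_leadingCoeff_pos_int (hlead ▸ hpos))
  refine ⟨hnatDegree, hlead, hpos, x₀, fun x hx => ?_⟩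
  simpa only [eval_sub, sub_pos] using hx₀ x hx.le
end
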